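/- arXiv:2203.01732 — 6 statements merged into one kernel-verified Lean document; each statement's English description precedes it below -/
import Mathlib

section
/- Let 𝒢 be symmetric positive semidefinite, 𝒜 have full row rank, and suppose 𝒢 is positive definite on ker 𝒜. Then for every b ∈ ℝ^m and c ∈ ℝ^n, the constrained minimization problem min { ½ xᵀ𝒢x + cᵀx : x ∈ ℝ^n, 𝒜x = b } has exactly one solution. -/
/-! For a symmetric form `B`, the objective `q x = ½ B x x + ℓ x` satisfies
`q (x + u) = q x + (B x u + ℓ u) + ½ B u u`. Positivity of `B` on the finite-dimensional
subspace `K` makes its restriction to `K` nondegenerate, so `v ↦ B v ·` is an isomorphism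
`K ≃ K*`; solving in it gives a feasible `x` at which the linear term vanishes on `K`.
On the feasible set `x + K` we then have `q (x + u) = q x + ½ B u u`, which exceeds `q x`
unless `u = 0`. -/

open Matrix

namespace LinearMap.BilinForm

variable {V : Type*} [AddCommGroup V] [Module ℝ V]
  (B : LinearMap.BilinForm ℝ V) (ℓ : Module.Dual ℝ V)

theorem quadratic_objective_add (hB : B.IsSymm) (x u : V) :
    (1 / 2) * B (x + u) (x + u) + ℓ (x + u)
      = (1 / 2) * B x x + ℓ x + (B x u + ℓ u) + (1 / 2) * B u u := by
  simp only [map_add, LinearMap.add_apply, hB.eq u x]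
  ring

variable {B} {K : Submodule ℝ V}

theorem nondegenerate_restrict_of_pos (hK : ∀ u ∈ K, u ≠ 0 → 0 < B u u) :
    (B.restrict K).Nondegenerate := by
  have hsep : ∀ u : K, B u u = 0 → u = 0 := fun u hu =>
    by_contra fun hne => (hK u u.2 (by simpa using hne)).ne' hu
  exact ⟨fun u hu => hsep u (hu u), fun u hu => hsep u (hu u)⟩

theorem exists_sub_mem_forall_add_eq_zero [FiniteDimensional ℝ K]
    (hK : ∀ u ∈ K, u ≠ 0 → 0 < B u u) (x₀ : V) :
    ∃ x, x - x₀ ∈ K ∧ ∀ u ∈ K, B x u + ℓ u = 0 := by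
  let e := (B.restrict K).toDual (nondegenerate_restrict_of_pos hK)
  let ψ : Module.Dual ℝ K := -((B x₀ + ℓ) ∘ₗ K.subtype)
  let v : K := e.symm ψ
  refine ⟨x₀ + v, by simp, fun u hu => ?_⟩
  have hv : B v u = -(B x₀ u + ℓ u) := by
    simpa [v, e, ψ] using apply_toDual_symm_apply (B := B.restrict K) ψ ⟨u, hu⟩
  simp only [map_add, LinearMap.add_apply, hv]
  ring

theorem existsUnique_sub_mem_forall_le [FiniteDimensional ℝ K] (hB : B.IsSymm)
    (hK : ∀ u ∈ K, u ≠ 0 → 0 < B u u) (x₀ : V) :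
    ∃! x, x - x₀ ∈ K ∧ ∀ y, y - x₀ ∈ K →
      (1 / 2) * B x x + ℓ x ≤ (1 / 2) * B y y + ℓ y := by
  obtain ⟨x, hx, hstat⟩ := exists_sub_mem_forall_add_eq_zero ℓ hK x₀
  have hfeas : ∀ y, y - x₀ ∈ K → y - x ∈ K := fun y hy => by simpa using K.sub_mem hy hx
  have hvalue : ∀ y, y - x₀ ∈ K →
      (1 / 2) * B y y + ℓ y = (1 / 2) * B x x + ℓ x + (1 / 2) * B (y - x) (y - x) :=
    fun y hy => by
      simpa only [add_sub_cancel, hstat _ (hfeas y hy), add_zero] using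
        quadratic_objective_add B ℓ hB x (y - x)
  refine ⟨x, ⟨hx, fun y hy => ?_⟩, fun y ⟨hy, hmin⟩ => ?_⟩
  · have hnonneg : 0 ≤ B (y - x) (y - x) := by
      by_cases h : y - x = 0
      · simp [h]
      · exact (hK _ (hfeas y hy) h).le
    linarith [hvalue y hy]
  · by_contra hne
    have hpos := hK (y - x) (hfeas y hy) (sub_ne_zero.mpr hne)
    linarith [hvalue y hy, hmin x hx]

end LinearMap.BilinForm

open LinearMap.BilinForm in
theorem constrained_quadratic_unique_minimizer_general
    (n m : ℕ)
    (G : Matrix (Fin n) (Fin n) ℝ) (hGsym : G.IsSymm)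
    (A : Matrix (Fin m) (Fin n) ℝ) (hA : Function.Surjective A.mulVec)
    (hGker : ∀ x : Fin n → ℝ, x ≠ 0 → A.mulVec x = 0 → 0 < x ⬝ᵥ G.mulVec x)
    (b : Fin m → ℝ) (c : Fin n → ℝ) :
    ∃! x : Fin n → ℝ, A.mulVec x = b ∧
      ∀ y : Fin n → ℝ, A.mulVec y = b →
        (1 / 2) * (x ⬝ᵥ G.mulVec x) + c ⬝ᵥ x ≤ (1 / 2) * (y ⬝ᵥ G.mulVec y) + c ⬝ᵥ y := by
  obtain ⟨x₀, hx₀⟩ := hA b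
  have hfeas : ∀ y, A *ᵥ y = b ↔ y - x₀ ∈ LinearMap.ker A.mulVecLin := fun y => by
    rw [LinearMap.mem_ker, mulVecLin_apply, mulVec_sub, hx₀, sub_eq_zero]
  have hpos : ∀ u ∈ LinearMap.ker A.mulVecLin, u ≠ 0 → 0 < toBilin' G u u :=
    fun u hu hne => by simpa [toBilin'_apply'] using hGker u hne hu
  simpa only [hfeas, toBilin'_apply', dotProductBilin_apply_apply] using
    existsUnique_sub_mem_forall_le (dotProductBilin ℝ ℝ c)
      (isSymm_toBilin'_iff_isSymm.mpr hGsym) hpos x₀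

/-- Let `𝒢` be symmetric positive semidefinite, `𝒜` have full row rank,
and suppose `𝒢` is positive definite on `ker 𝒜`. Then for every `b` and `c`, the problem
`min { ½ xᵀ𝒢x + cᵀx : 𝒜x = b }` has exactly one solution. -/
theorem constrained_quadratic_unique_minimizer
    (n m : ℕ) (hn : 0 < n) (hm : 0 < m) (hmn : m ≤ n)
    (G : Matrix (Fin n) (Fin n) ℝ) (hGsym : G.IsSymm) (hGpsd : G.PosSemidef)
    (A : Matrix (Fin m) (Fin n) ℝ) (hA : Function.Surjective A.mulVec)
    (hGker : ∀ x : Fin n → ℝ, x ≠ 0 → A.mulVec x = 0 → 0 < x ⬝ᵥ G.mulVec x)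
    (b : Fin m → ℝ) (c : Fin n → ℝ) :
    ∃! x : Fin n → ℝ, A.mulVec x = b ∧
      ∀ y : Fin n → ℝ, A.mulVec y = b →
        (1 / 2) * (x ⬝ᵥ G.mulVec x) + c ⬝ᵥ x ≤ (1 / 2) * (y ⬝ᵥ G.mulVec y) + c ⬝ᵥ y :=
  constrained_quadratic_unique_minimizer_general n m G hGsym A hA hGker b c
end

section
/- Assume that for every nonzero pair (Ψ_D, Ψ_Σ) ∈ ℝ^{N_D} × ℝ^{N_Σ} one has R A^{-1} S^β Ψ_Σ ≠ J_D Ψ_D or Ĵ Â^{-1} D̂^β Ψ_D ≠ J_Σ Ψ_Σ (in H). Then 𝒢 is positive definite on ker 𝒜, i.e. Φᵀ𝒢Φ > 0 for every nonzero Φ with 𝒜Φ = 0. -/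
open Matrix
open scoped RealInnerProductSpace

open Matrix

/-- The constraint matrix `𝒜 = [A 0 0 −S^β; 0 Â −D̂^β 0]` of the discrete
PDE-constrained optimization problem, acting on `(U, Û, Ψ_D, Ψ_Σ)`. -/
noncomputable def constraintMat {N Nh ND NS : ℕ}
    (A : Matrix (Fin N) (Fin N) ℝ) (Ah : Matrix (Fin Nh) (Fin Nh) ℝ)
    (Sb : Matrix (Fin N) (Fin NS) ℝ) (Db : Matrix (Fin Nh) (Fin ND) ℝ) :
    Matrix (Fin N ⊕ Fin Nh) ((Fin N ⊕ Fin Nh) ⊕ (Fin ND ⊕ Fin NS)) ℝ :=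
  Matrix.fromCols (Matrix.fromBlocks A 0 0 Ah) (Matrix.fromBlocks 0 (-Sb) (-Db) 0)

/-- The symmetric matrix `𝒢 = [[G,0,−D,0],[0,Ĝ,0,−Ŝ],[−Dᵀ,0,M^D,0],[0,−Ŝᵀ,0,M^Σ]]`
acting on `(U, Û, Ψ_D, Ψ_Σ)`. -/
noncomputable def gMat {N Nh ND NS : ℕ}
    (G : Matrix (Fin N) (Fin N) ℝ) (Gh : Matrix (Fin Nh) (Fin Nh) ℝ)
    (MD : Matrix (Fin ND) (Fin ND) ℝ) (MS : Matrix (Fin NS) (Fin NS) ℝ)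
    (D : Matrix (Fin N) (Fin ND) ℝ) (Sh : Matrix (Fin Nh) (Fin NS) ℝ) :
    Matrix ((Fin N ⊕ Fin Nh) ⊕ (Fin ND ⊕ Fin NS))
      ((Fin N ⊕ Fin Nh) ⊕ (Fin ND ⊕ Fin NS)) ℝ :=
  Matrix.fromBlocks (Matrix.fromBlocks G 0 0 Gh) (Matrix.fromBlocks (-D) 0 0 (-Sh))
    (Matrix.fromBlocks (-Dᵀ) 0 0 (-Shᵀ)) (Matrix.fromBlocks MD 0 0 MS)

/-! On `ker 𝒜` the state variables are slaved to the controls, `U = A⁻¹ S^β Ψ_Σ` and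
`Û = Â⁻¹ D̂^β Ψ_D`, and since `𝒢` is the Gram matrix of `(U, Û, Ψ_D, Ψ_Σ) ↦ (R U - J_D Ψ_D,
Ĵ Û - J_Σ Ψ_Σ)` its quadratic form is `‖R U - J_D Ψ_D‖² + ‖Ĵ Û - J_Σ Ψ_Σ‖²`. The hypothesis makes
one of the two norms nonzero whenever `(Ψ_D, Ψ_Σ) ≠ 0`, and `(Ψ_D, Ψ_Σ) = 0` forces `Φ = 0`. -/

theorem dotProduct_mulVec_eq_inner_of_gram {ι κ H : Type*} [Fintype ι] [DecidableEq ι]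
    [Fintype κ] [DecidableEq κ] [NormedAddCommGroup H] [InnerProductSpace ℝ H]
    (L₁ : (ι → ℝ) →ₗ[ℝ] H) (L₂ : (κ → ℝ) →ₗ[ℝ] H) (M : Matrix ι κ ℝ)
    (hM : ∀ k l, M k l = ⟪L₁ (Pi.single k 1), L₂ (Pi.single l 1)⟫) (x : ι → ℝ) (y : κ → ℝ) :
    x ⬝ᵥ M *ᵥ y = ⟪L₁ x, L₂ y⟫ := by
  have hM' : M = LinearMap.toMatrix₂' ℝ ((innerₗ H).compl₁₂ L₁ L₂) := by
    ext k l
    simp [hM]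
  rw [← toLinearMap₂'_apply', hM', toLinearMap₂'_toMatrix']
  rfl

theorem dotProduct_gram_sub_eq_norm_sq {ι κ H : Type*} [Fintype ι] [DecidableEq ι]
    [Fintype κ] [DecidableEq κ] [NormedAddCommGroup H] [InnerProductSpace ℝ H]
    (L₁ : (ι → ℝ) →ₗ[ℝ] H) (L₂ : (κ → ℝ) →ₗ[ℝ] H)
    (G : Matrix ι ι ℝ) (hG : ∀ k l, G k l = ⟪L₁ (Pi.single k 1), L₁ (Pi.single l 1)⟫)
    (M : Matrix κ κ ℝ) (hM : ∀ k l, M k l = ⟪L₂ (Pi.single k 1), L₂ (Pi.single l 1)⟫)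
    (D : Matrix ι κ ℝ) (hD : ∀ k l, D k l = ⟪L₁ (Pi.single k 1), L₂ (Pi.single l 1)⟫)
    (u : ι → ℝ) (p : κ → ℝ) :
    u ⬝ᵥ G *ᵥ u + u ⬝ᵥ (-D) *ᵥ p + p ⬝ᵥ (-Dᵀ) *ᵥ u + p ⬝ᵥ M *ᵥ p = ‖L₁ u - L₂ p‖ ^ 2 := by
  have hDT : p ⬝ᵥ Dᵀ *ᵥ u = u ⬝ᵥ D *ᵥ p := by
    rw [dotProduct_mulVec, vecMul_transpose, dotProduct_comm]
  rw [neg_mulVec, neg_mulVec, dotProduct_neg, dotProduct_neg, hDT,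
    dotProduct_mulVec_eq_inner_of_gram L₁ L₁ G hG, dotProduct_mulVec_eq_inner_of_gram L₁ L₂ D hD,
    dotProduct_mulVec_eq_inner_of_gram L₂ L₂ M hM, norm_sub_sq_real,
    real_inner_self_eq_norm_sq, real_inner_self_eq_norm_sq]
  ring

theorem sumElim_dotProduct_fromBlocks_mulVec_sumElim {l m l' m' α : Type*} [Fintype l]
    [Fintype m] [Fintype l'] [Fintype m'] [CommSemiring α] (P : Matrix l l' α) (Q : Matrix l m' α)
    (R : Matrix m l' α) (S : Matrix m m' α) (x : l → α) (y : m → α) (x' : l' → α) (y' : m' → α) :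
    Sum.elim x y ⬝ᵥ fromBlocks P Q R S *ᵥ Sum.elim x' y' =
      x ⬝ᵥ P *ᵥ x' + x ⬝ᵥ Q *ᵥ y' + y ⬝ᵥ R *ᵥ x' + y ⬝ᵥ S *ᵥ y' := by
  rw [fromBlocks_mulVec, Sum.elim_comp_inl, Sum.elim_comp_inr, sumElim_dotProduct_sumElim,
    dotProduct_add, dotProduct_add]
  ring

theorem constraintMat_mulVec_sumElim {N Nh ND NS : ℕ}
    (A : Matrix (Fin N) (Fin N) ℝ) (Ah : Matrix (Fin Nh) (Fin Nh) ℝ)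
    (Sb : Matrix (Fin N) (Fin NS) ℝ) (Db : Matrix (Fin Nh) (Fin ND) ℝ)
    (U : Fin N → ℝ) (Uh : Fin Nh → ℝ) (PD : Fin ND → ℝ) (PS : Fin NS → ℝ) :
    constraintMat A Ah Sb Db *ᵥ Sum.elim (Sum.elim U Uh) (Sum.elim PD PS) =
      Sum.elim (A *ᵥ U - Sb *ᵥ PS) (Ah *ᵥ Uh - Db *ᵥ PD) := by
  rw [constraintMat, fromCols_mulVec_sumElim, fromBlocks_mulVec, fromBlocks_mulVec]
  simp only [zero_mulVec, add_zero, zero_add, neg_mulVec, Sum.elim_comp_inl, Sum.elim_comp_inr,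
    Sum.elim_add_add, sub_eq_add_neg]

theorem sumElim_dotProduct_gMat_mulVec_sumElim {N Nh ND NS : ℕ} {H : Type*}
    [NormedAddCommGroup H] [InnerProductSpace ℝ H]
    (R : (Fin N → ℝ) →ₗ[ℝ] H) (Jh : (Fin Nh → ℝ) →ₗ[ℝ] H)
    (JD : (Fin ND → ℝ) →ₗ[ℝ] H) (JS : (Fin NS → ℝ) →ₗ[ℝ] H)
    (G : Matrix (Fin N) (Fin N) ℝ)
    (hG : ∀ k l, G k l = ⟪R (Pi.single k 1), R (Pi.single l 1)⟫)
    (Gh : Matrix (Fin Nh) (Fin Nh) ℝ)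
    (hGh : ∀ k l, Gh k l = ⟪Jh (Pi.single k 1), Jh (Pi.single l 1)⟫)
    (MD : Matrix (Fin ND) (Fin ND) ℝ)
    (hMD : ∀ k l, MD k l = ⟪JD (Pi.single k 1), JD (Pi.single l 1)⟫)
    (MS : Matrix (Fin NS) (Fin NS) ℝ)
    (hMS : ∀ k l, MS k l = ⟪JS (Pi.single k 1), JS (Pi.single l 1)⟫)
    (D : Matrix (Fin N) (Fin ND) ℝ)
    (hD : ∀ k l, D k l = ⟪R (Pi.single k 1), JD (Pi.single l 1)⟫)
    (Sh : Matrix (Fin Nh) (Fin NS) ℝ)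
    (hSh : ∀ k l, Sh k l = ⟪Jh (Pi.single k 1), JS (Pi.single l 1)⟫)
    (U : Fin N → ℝ) (Uh : Fin Nh → ℝ) (PD : Fin ND → ℝ) (PS : Fin NS → ℝ) :
    Sum.elim (Sum.elim U Uh) (Sum.elim PD PS) ⬝ᵥ
        gMat G Gh MD MS D Sh *ᵥ Sum.elim (Sum.elim U Uh) (Sum.elim PD PS) =
      ‖R U - JD PD‖ ^ 2 + ‖Jh Uh - JS PS‖ ^ 2 := by
  simp only [gMat, sumElim_dotProduct_fromBlocks_mulVec_sumElim, zero_mulVec, dotProduct_zero,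
    add_zero]
  rw [← dotProduct_gram_sub_eq_norm_sq R JD G hG MD hMD D hD,
    ← dotProduct_gram_sub_eq_norm_sq Jh JS Gh hGh MS hMS Sh hSh]
  ring

theorem eq_inv_mulVec_of_mulVec_eq {n α : Type*} [Fintype n] [DecidableEq n] [CommRing α]
    {A : Matrix n n α} (hA : IsUnit A.det) {u v : n → α} (h : A *ᵥ u = v) : u = A⁻¹ *ᵥ v := by
  rw [← h, mulVec_mulVec, nonsing_inv_mul A hA, one_mulVec]

theorem gMat_posdef_on_ker_general
    (N Nh ND NS : ℕ)
    (A : Matrix (Fin N) (Fin N) ℝ) (hA : IsUnit A.det)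
    (Ah : Matrix (Fin Nh) (Fin Nh) ℝ) (hAh : IsUnit Ah.det)
    (Sb : Matrix (Fin N) (Fin NS) ℝ) (Db : Matrix (Fin Nh) (Fin ND) ℝ)
    (H : Type*) [NormedAddCommGroup H] [InnerProductSpace ℝ H]
    (R : (Fin N → ℝ) →ₗ[ℝ] H) (Jh : (Fin Nh → ℝ) →ₗ[ℝ] H)
    (JD : (Fin ND → ℝ) →ₗ[ℝ] H) (JS : (Fin NS → ℝ) →ₗ[ℝ] H)
    (G : Matrix (Fin N) (Fin N) ℝ)
    (hG : ∀ k l, G k l = ⟪R (Pi.single k 1), R (Pi.single l 1)⟫)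
    (Gh : Matrix (Fin Nh) (Fin Nh) ℝ)
    (hGh : ∀ k l, Gh k l = ⟪Jh (Pi.single k 1), Jh (Pi.single l 1)⟫)
    (MD : Matrix (Fin ND) (Fin ND) ℝ)
    (hMD : ∀ k l, MD k l = ⟪JD (Pi.single k 1), JD (Pi.single l 1)⟫)
    (MS : Matrix (Fin NS) (Fin NS) ℝ)
    (hMS : ∀ k l, MS k l = ⟪JS (Pi.single k 1), JS (Pi.single l 1)⟫)
    (D : Matrix (Fin N) (Fin ND) ℝ)
    (hD : ∀ k l, D k l = ⟪R (Pi.single k 1), JD (Pi.single l 1)⟫)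
    (Sh : Matrix (Fin Nh) (Fin NS) ℝ)
    (hSh : ∀ k l, Sh k l = ⟪Jh (Pi.single k 1), JS (Pi.single l 1)⟫)
    (hne : ∀ (PD : Fin ND → ℝ) (PS : Fin NS → ℝ), (PD, PS) ≠ 0 →
      R (A⁻¹.mulVec (Sb.mulVec PS)) ≠ JD PD ∨
        Jh (Ah⁻¹.mulVec (Db.mulVec PD)) ≠ JS PS) :
    ∀ Φ : ((Fin N ⊕ Fin Nh) ⊕ (Fin ND ⊕ Fin NS)) → ℝ, Φ ≠ 0 →
      (constraintMat A Ah Sb Db).mulVec Φ = 0 →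
        0 < Φ ⬝ᵥ (gMat G Gh MD MS D Sh).mulVec Φ := by
  intro Φ hΦ hker
  obtain ⟨U, Uh, PD, PS, rfl⟩ : ∃ U Uh PD PS, Φ = Sum.elim (Sum.elim U Uh) (Sum.elim PD PS) :=
    ⟨_, _, _, _, by rw [Sum.elim_comp_inl_inr, Sum.elim_comp_inl_inr, Sum.elim_comp_inl_inr]⟩
  rw [constraintMat_mulVec_sumElim, ← Sum.elim_zero_zero, Sum.elim_eq_iff, sub_eq_zero,
    sub_eq_zero] at hker
  have hU := eq_inv_mulVec_of_mulVec_eq hA hker.1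
  have hUh := eq_inv_mulVec_of_mulVec_eq hAh hker.2
  have hPsi : (PD, PS) ≠ 0 := by
    rintro hPsi
    obtain ⟨rfl, rfl⟩ := Prod.mk_eq_zero.mp hPsi
    apply hΦ
    simp [hU, hUh]
  rw [sumElim_dotProduct_gMat_mulVec_sumElim R Jh JD JS G hG Gh hGh MD hMD MS hMS D hD Sh hSh,
    hU, hUh]
  rcases hne PD PS hPsi with h | h
  · have := norm_pos_iff.mpr (sub_ne_zero.mpr h)
    positivity
  · have := norm_pos_iff.mpr (sub_ne_zero.mpr h)
    positivity

/-- If for every nonzero pair `(Ψ_D, Ψ_Σ)` one has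
`R A⁻¹ S^β Ψ_Σ ≠ J_D Ψ_D` or `Ĵ Â⁻¹ D̂^β Ψ_D ≠ J_Σ Ψ_Σ`, then `𝒢` is positive
definite on `ker 𝒜`. -/
theorem gMat_posdef_on_ker
    (N Nh ND NS : ℕ) (hN : 0 < N) (hNh : 0 < Nh) (hND : 0 < ND) (hNS : 0 < NS)
    (A : Matrix (Fin N) (Fin N) ℝ) (hA : IsUnit A.det)
    (Ah : Matrix (Fin Nh) (Fin Nh) ℝ) (hAh : IsUnit Ah.det)
    (Sb : Matrix (Fin N) (Fin NS) ℝ) (Db : Matrix (Fin Nh) (Fin ND) ℝ)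
    (H : Type*) [NormedAddCommGroup H] [InnerProductSpace ℝ H]
    (R : (Fin N → ℝ) →ₗ[ℝ] H) (Jh : (Fin Nh → ℝ) →ₗ[ℝ] H)
    (JD : (Fin ND → ℝ) →ₗ[ℝ] H) (JS : (Fin NS → ℝ) →ₗ[ℝ] H)
    (G : Matrix (Fin N) (Fin N) ℝ)
    (hG : ∀ k l, G k l = ⟪R (Pi.single k 1), R (Pi.single l 1)⟫)
    (Gh : Matrix (Fin Nh) (Fin Nh) ℝ)
    (hGh : ∀ k l, Gh k l = ⟪Jh (Pi.single k 1), Jh (Pi.single l 1)⟫)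
    (MD : Matrix (Fin ND) (Fin ND) ℝ)
    (hMD : ∀ k l, MD k l = ⟪JD (Pi.single k 1), JD (Pi.single l 1)⟫)
    (MS : Matrix (Fin NS) (Fin NS) ℝ)
    (hMS : ∀ k l, MS k l = ⟪JS (Pi.single k 1), JS (Pi.single l 1)⟫)
    (D : Matrix (Fin N) (Fin ND) ℝ)
    (hD : ∀ k l, D k l = ⟪R (Pi.single k 1), JD (Pi.single l 1)⟫)
    (Sh : Matrix (Fin Nh) (Fin NS) ℝ)
    (hSh : ∀ k l, Sh k l = ⟪Jh (Pi.single k 1), JS (Pi.single l 1)⟫)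
    (hne : ∀ (PD : Fin ND → ℝ) (PS : Fin NS → ℝ), (PD, PS) ≠ 0 →
      R (A⁻¹.mulVec (Sb.mulVec PS)) ≠ JD PD ∨
        Jh (Ah⁻¹.mulVec (Db.mulVec PD)) ≠ JS PS) :
    ∀ Φ : ((Fin N ⊕ Fin Nh) ⊕ (Fin ND ⊕ Fin NS)) → ℝ, Φ ≠ 0 →
      (constraintMat A Ah Sb Db).mulVec Φ = 0 →
        0 < Φ ⬝ᵥ (gMat G Gh MD MS D Sh).mulVec Φ :=
  gMat_posdef_on_ker_general N Nh ND NS A hA Ah hAh Sb Db H R Jh JD JS G hG Gh hGh MD hMD MS hMS D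
    hD Sh hSh hne
end

section
/- Assume that for every nonzero pair (Ψ_D, Ψ_Σ) ∈ ℝ^{N_D} × ℝ^{N_Σ} one has R A^{-1} S^β Ψ_Σ ≠ J_D Ψ_D or Ĵ Â^{-1} D̂^β Ψ_D ≠ J_Σ Ψ_Σ (in H). Then the saddle-point (KKT) block matrix 𝒦 = [[𝒢, 𝒜ᵀ], [𝒜, 0]] is nonsingular; consequently, for every right-hand side the KKT system has a unique solution. -/
/-!
If `𝒦 (x, λ) = 0` then `𝒜 x = 0` and `𝒢 x = -𝒜ᵀ λ`, so `xᵀ 𝒢 x = -(𝒜 x)ᵀ λ = 0`.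
Since `𝒢` is the Gram matrix of `(U, Û, Ψ_D, Ψ_Σ) ↦ (R U - J_D Ψ_D, Ĵ Û - J_Σ Ψ_Σ)`, this gives
`R U = J_D Ψ_D` and `Ĵ Û = J_Σ Ψ_Σ`, while `𝒜 x = 0` gives `U = A⁻¹ S^β Ψ_Σ` and
`Û = Â⁻¹ D̂^β Ψ_D`; the hypothesis then forces `x = 0`. Finally `𝒜ᵀ λ = 0` forces `λ = 0`
because the `(U, Û)` block of `𝒜` is invertible.
-/

open Matrix
open scoped RealInnerProductSpace

open Matrix

section Gram

variable {ι κ H : Type*} [Fintype ι] [Fintype κ] [DecidableEq ι] [DecidableEq κ]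
  [NormedAddCommGroup H] [InnerProductSpace ℝ H]

lemma dotProduct_mulVec_eq_inner (R : (ι → ℝ) →ₗ[ℝ] H) (J : (κ → ℝ) →ₗ[ℝ] H)
    {M : Matrix ι κ ℝ} (hM : ∀ k l, M k l = ⟪R (Pi.single k 1), J (Pi.single l 1)⟫)
    (u : ι → ℝ) (v : κ → ℝ) : u ⬝ᵥ M *ᵥ v = ⟪R u, J v⟫ := by
  conv_rhs => rw [← (Pi.basisFun ℝ ι).sum_repr u, ← (Pi.basisFun ℝ κ).sum_repr v]
  simp only [Pi.basisFun_repr, Pi.basisFun_apply, map_sum, map_smul, sum_inner, inner_sum,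
    real_inner_smul_left, real_inner_smul_right, ← hM, dotProduct, mulVec, Finset.mul_sum]
  rw [Finset.sum_comm]
  exact Finset.sum_congr rfl fun _ _ => Finset.sum_congr rfl fun _ _ => by ring

lemma gram_quadForm_eq_norm_sub_sq (R : (ι → ℝ) →ₗ[ℝ] H) (J : (κ → ℝ) →ₗ[ℝ] H)
    {G : Matrix ι ι ℝ} {D : Matrix ι κ ℝ} {M : Matrix κ κ ℝ}
    (hG : ∀ k l, G k l = ⟪R (Pi.single k 1), R (Pi.single l 1)⟫)
    (hD : ∀ k l, D k l = ⟪R (Pi.single k 1), J (Pi.single l 1)⟫)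
    (hM : ∀ k l, M k l = ⟪J (Pi.single k 1), J (Pi.single l 1)⟫) (u : ι → ℝ) (v : κ → ℝ) :
    u ⬝ᵥ G *ᵥ u - u ⬝ᵥ D *ᵥ v - v ⬝ᵥ Dᵀ *ᵥ u + v ⬝ᵥ M *ᵥ v = ‖R u - J v‖ ^ 2 := by
  rw [dotProduct_transpose_mulVec, dotProduct_mulVec_eq_inner R R hG,
    dotProduct_mulVec_eq_inner R J hD, dotProduct_mulVec_eq_inner J J hM, norm_sub_sq_real,
    real_inner_self_eq_norm_sq, real_inner_self_eq_norm_sq]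
  ring

end Gram

section SaddlePoint

variable {K m n : Type*} [Field K] [Fintype m] [Fintype n] [DecidableEq m] [DecidableEq n]

theorem det_fromBlocks_transpose_zero_ne_zero (Q : Matrix m m K) (C : Matrix n m K)
    (hQ : ∀ x, C *ᵥ x = 0 → x ⬝ᵥ Q *ᵥ x = 0 → x = 0)
    (hC : ∀ y, Cᵀ *ᵥ y = 0 → y = 0) :
    (fromBlocks Q Cᵀ C 0).det ≠ 0 := by
  rw [Ne, ← exists_mulVec_eq_zero_iff]
  rintro ⟨z, hz0, hz⟩
  obtain ⟨x, y, rfl⟩ : ∃ x y, z = Sum.elim x y := ⟨_, _, (Sum.elim_comp_inl_inr z).symm⟩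
  rw [fromBlocks_mulVec, Sum.elim_comp_inl, Sum.elim_comp_inr, ← Sum.elim_zero_zero,
    Sum.elim_eq_iff, zero_mulVec, add_zero] at hz
  obtain ⟨hstat, hfeas⟩ := hz
  have hquad : x ⬝ᵥ Q *ᵥ x = 0 := by
    rw [eq_neg_of_add_eq_zero_left hstat, dotProduct_neg, dotProduct_transpose_mulVec, hfeas,
      dotProduct_zero, neg_zero]
  have hx : x = 0 := hQ x hfeas hquad
  rw [hx, mulVec_zero, zero_add] at hstat
  have hy : y = 0 := hC y hstat
  exact hz0 (by rw [hx, hy, Sum.elim_zero_zero])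

lemma transpose_fromCols_mulVec_eq_zero {p : Type*} [Fintype p] {B : Matrix n n K}
    (hB : IsUnit B.det) (E : Matrix n p K) {y : n → K} (hy : (fromCols B E)ᵀ *ᵥ y = 0) :
    y = 0 := by
  rw [transpose_fromCols, fromRows_mulVec, ← Sum.elim_zero_zero, Sum.elim_eq_iff] at hy
  have hinj : Function.Injective Bᵀ.mulVec :=
    mulVec_injective_iff_isUnit.2 ((isUnit_iff_isUnit_det _).2 (isUnit_det_transpose B hB))
  exact hinj (hy.1.trans (mulVec_zero _).symm)

end SaddlePoint

section KKT

variable {N Nh ND NS : ℕ} {H : Type*} [NormedAddCommGroup H] [InnerProductSpace ℝ H]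
  {A : Matrix (Fin N) (Fin N) ℝ} {Ah : Matrix (Fin Nh) (Fin Nh) ℝ}
  {Sb : Matrix (Fin N) (Fin NS) ℝ} {Db : Matrix (Fin Nh) (Fin ND) ℝ}
  (R : (Fin N → ℝ) →ₗ[ℝ] H) (Jh : (Fin Nh → ℝ) →ₗ[ℝ] H)
  (JD : (Fin ND → ℝ) →ₗ[ℝ] H) (JS : (Fin NS → ℝ) →ₗ[ℝ] H)
  {G : Matrix (Fin N) (Fin N) ℝ} {Gh : Matrix (Fin Nh) (Fin Nh) ℝ}
  {MD : Matrix (Fin ND) (Fin ND) ℝ} {MS : Matrix (Fin NS) (Fin NS) ℝ}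
  {D : Matrix (Fin N) (Fin ND) ℝ} {Sh : Matrix (Fin Nh) (Fin NS) ℝ}

lemma constraintMat_mulVec (u : Fin N → ℝ) (uh : Fin Nh → ℝ) (pD : Fin ND → ℝ)
    (pS : Fin NS → ℝ) :
    constraintMat A Ah Sb Db *ᵥ Sum.elim (Sum.elim u uh) (Sum.elim pD pS) =
      Sum.elim (A *ᵥ u - Sb *ᵥ pS) (Ah *ᵥ uh - Db *ᵥ pD) := by
  simp only [constraintMat, fromCols_mulVec_sumElim, fromBlocks_mulVec, Sum.elim_comp_inl,
    Sum.elim_comp_inr, zero_mulVec, neg_mulVec, add_zero, zero_add, Sum.elim_add_add,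
    sub_eq_add_neg]

lemma constraintMat_transpose_mulVec_eq_zero (hA : IsUnit A.det) (hAh : IsUnit Ah.det)
    {y : Fin N ⊕ Fin Nh → ℝ} (hy : (constraintMat A Ah Sb Db)ᵀ *ᵥ y = 0) : y = 0 :=
  transpose_fromCols_mulVec_eq_zero (by rw [det_fromBlocks_zero₂₁]; exact hA.mul hAh) _ hy

lemma dotProduct_gMat_mulVec
    (hG : ∀ k l, G k l = ⟪R (Pi.single k 1), R (Pi.single l 1)⟫)
    (hGh : ∀ k l, Gh k l = ⟪Jh (Pi.single k 1), Jh (Pi.single l 1)⟫)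
    (hMD : ∀ k l, MD k l = ⟪JD (Pi.single k 1), JD (Pi.single l 1)⟫)
    (hMS : ∀ k l, MS k l = ⟪JS (Pi.single k 1), JS (Pi.single l 1)⟫)
    (hD : ∀ k l, D k l = ⟪R (Pi.single k 1), JD (Pi.single l 1)⟫)
    (hSh : ∀ k l, Sh k l = ⟪Jh (Pi.single k 1), JS (Pi.single l 1)⟫)
    (u : Fin N → ℝ) (uh : Fin Nh → ℝ) (pD : Fin ND → ℝ) (pS : Fin NS → ℝ) :
    Sum.elim (Sum.elim u uh) (Sum.elim pD pS) ⬝ᵥ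
        gMat G Gh MD MS D Sh *ᵥ Sum.elim (Sum.elim u uh) (Sum.elim pD pS) =
      ‖R u - JD pD‖ ^ 2 + ‖Jh uh - JS pS‖ ^ 2 := by
  rw [← gram_quadForm_eq_norm_sub_sq R JD hG hD hMD,
    ← gram_quadForm_eq_norm_sub_sq Jh JS hGh hSh hMS]
  simp only [gMat, fromBlocks_mulVec, Sum.elim_comp_inl, Sum.elim_comp_inr, zero_mulVec,
    neg_mulVec, add_zero, zero_add, sumElim_dotProduct_sumElim, dotProduct_add, dotProduct_neg]
  ring

lemma gMat_definite_on_ker_constraintMat (hA : IsUnit A.det) (hAh : IsUnit Ah.det)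
    (hG : ∀ k l, G k l = ⟪R (Pi.single k 1), R (Pi.single l 1)⟫)
    (hGh : ∀ k l, Gh k l = ⟪Jh (Pi.single k 1), Jh (Pi.single l 1)⟫)
    (hMD : ∀ k l, MD k l = ⟪JD (Pi.single k 1), JD (Pi.single l 1)⟫)
    (hMS : ∀ k l, MS k l = ⟪JS (Pi.single k 1), JS (Pi.single l 1)⟫)
    (hD : ∀ k l, D k l = ⟪R (Pi.single k 1), JD (Pi.single l 1)⟫)
    (hSh : ∀ k l, Sh k l = ⟪Jh (Pi.single k 1), JS (Pi.single l 1)⟫)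
    (hne : ∀ (PD : Fin ND → ℝ) (PS : Fin NS → ℝ), (PD, PS) ≠ 0 →
      R (A⁻¹ *ᵥ (Sb *ᵥ PS)) ≠ JD PD ∨ Jh (Ah⁻¹ *ᵥ (Db *ᵥ PD)) ≠ JS PS)
    (x : (Fin N ⊕ Fin Nh) ⊕ (Fin ND ⊕ Fin NS) → ℝ) (hx : constraintMat A Ah Sb Db *ᵥ x = 0)
    (hQ : x ⬝ᵥ gMat G Gh MD MS D Sh *ᵥ x = 0) : x = 0 := by
  obtain ⟨u, uh, pD, pS, rfl⟩ :
      ∃ u uh pD pS, x = Sum.elim (Sum.elim u uh) (Sum.elim pD pS) :=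
    ⟨(x ∘ Sum.inl) ∘ Sum.inl, (x ∘ Sum.inl) ∘ Sum.inr, (x ∘ Sum.inr) ∘ Sum.inl,
      (x ∘ Sum.inr) ∘ Sum.inr, by simp only [Sum.elim_comp_inl_inr]⟩
  rw [constraintMat_mulVec, ← Sum.elim_zero_zero, Sum.elim_eq_iff, sub_eq_zero, sub_eq_zero] at hx
  rw [dotProduct_gMat_mulVec R Jh JD JS hG hGh hMD hMS hD hSh] at hQ
  obtain ⟨hU, hUh⟩ := hx
  obtain ⟨hRD, hJS⟩ := (add_eq_zero_iff_of_nonneg (sq_nonneg _) (sq_nonneg _)).1 hQ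
  simp only [sq_eq_zero_iff, norm_eq_zero, sub_eq_zero] at hRD hJS
  have hu : u = A⁻¹ *ᵥ (Sb *ᵥ pS) := by
    rw [← hU, mulVec_mulVec, nonsing_inv_mul _ hA, one_mulVec]
  have huh : uh = Ah⁻¹ *ᵥ (Db *ᵥ pD) := by
    rw [← hUh, mulVec_mulVec, nonsing_inv_mul _ hAh, one_mulVec]
  obtain ⟨rfl, rfl⟩ : pD = 0 ∧ pS = 0 := by
    by_contra hp
    rcases hne pD pS (mt Prod.mk_eq_zero.1 hp) with h | h
    · exact h (hu ▸ hRD)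
    · exact h (huh ▸ hJS)
  simp only [hu, huh, mulVec_zero, Sum.elim_zero_zero]

end KKT

theorem kkt_block_matrix_nonsingular_general
    (N Nh ND NS : ℕ)
    (A : Matrix (Fin N) (Fin N) ℝ) (hA : IsUnit A.det)
    (Ah : Matrix (Fin Nh) (Fin Nh) ℝ) (hAh : IsUnit Ah.det)
    (Sb : Matrix (Fin N) (Fin NS) ℝ) (Db : Matrix (Fin Nh) (Fin ND) ℝ)
    (H : Type*) [NormedAddCommGroup H] [InnerProductSpace ℝ H]
    (R : (Fin N → ℝ) →ₗ[ℝ] H) (Jh : (Fin Nh → ℝ) →ₗ[ℝ] H)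
    (JD : (Fin ND → ℝ) →ₗ[ℝ] H) (JS : (Fin NS → ℝ) →ₗ[ℝ] H)
    (G : Matrix (Fin N) (Fin N) ℝ)
    (hG : ∀ k l, G k l = ⟪R (Pi.single k 1), R (Pi.single l 1)⟫)
    (Gh : Matrix (Fin Nh) (Fin Nh) ℝ)
    (hGh : ∀ k l, Gh k l = ⟪Jh (Pi.single k 1), Jh (Pi.single l 1)⟫)
    (MD : Matrix (Fin ND) (Fin ND) ℝ)
    (hMD : ∀ k l, MD k l = ⟪JD (Pi.single k 1), JD (Pi.single l 1)⟫)
    (MS : Matrix (Fin NS) (Fin NS) ℝ)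
    (hMS : ∀ k l, MS k l = ⟪JS (Pi.single k 1), JS (Pi.single l 1)⟫)
    (D : Matrix (Fin N) (Fin ND) ℝ)
    (hD : ∀ k l, D k l = ⟪R (Pi.single k 1), JD (Pi.single l 1)⟫)
    (Sh : Matrix (Fin Nh) (Fin NS) ℝ)
    (hSh : ∀ k l, Sh k l = ⟪Jh (Pi.single k 1), JS (Pi.single l 1)⟫)
    (hne : ∀ (PD : Fin ND → ℝ) (PS : Fin NS → ℝ), (PD, PS) ≠ 0 →
      R (A⁻¹.mulVec (Sb.mulVec PS)) ≠ JD PD ∨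
        Jh (Ah⁻¹.mulVec (Db.mulVec PD)) ≠ JS PS) :
    (Matrix.fromBlocks (gMat G Gh MD MS D Sh) (constraintMat A Ah Sb Db)ᵀ
        (constraintMat A Ah Sb Db) 0).det ≠ 0 ∧
    ∀ b : ((Fin N ⊕ Fin Nh) ⊕ (Fin ND ⊕ Fin NS)) ⊕ (Fin N ⊕ Fin Nh) → ℝ,
      ∃! z, (Matrix.fromBlocks (gMat G Gh MD MS D Sh) (constraintMat A Ah Sb Db)ᵀ
        (constraintMat A Ah Sb Db) 0).mulVec z = b := by
  have hdet := det_fromBlocks_transpose_zero_ne_zero _ _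
    (gMat_definite_on_ker_constraintMat R Jh JD JS hA hAh hG hGh hMD hMS hD hSh hne)
    (fun _ => constraintMat_transpose_mulVec_eq_zero hA hAh)
  have hunit := (isUnit_iff_isUnit_det _).2 (isUnit_iff_ne_zero.2 hdet)
  exact ⟨hdet, Function.Bijective.existsUnique
    ⟨mulVec_injective_iff_isUnit.2 hunit, mulVec_surjective_iff_isUnit.2 hunit⟩⟩

/-- Under the non-degeneracy assumption, the saddle-point (KKT) block
matrix `𝒦 = [[𝒢, 𝒜ᵀ], [𝒜, 0]]` is nonsingular; consequently, every KKT system has a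
unique solution. -/
theorem kkt_block_matrix_nonsingular
    (N Nh ND NS : ℕ) (hN : 0 < N) (hNh : 0 < Nh) (hND : 0 < ND) (hNS : 0 < NS)
    (A : Matrix (Fin N) (Fin N) ℝ) (hA : IsUnit A.det)
    (Ah : Matrix (Fin Nh) (Fin Nh) ℝ) (hAh : IsUnit Ah.det)
    (Sb : Matrix (Fin N) (Fin NS) ℝ) (Db : Matrix (Fin Nh) (Fin ND) ℝ)
    (H : Type*) [NormedAddCommGroup H] [InnerProductSpace ℝ H]
    (R : (Fin N → ℝ) →ₗ[ℝ] H) (Jh : (Fin Nh → ℝ) →ₗ[ℝ] H)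
    (JD : (Fin ND → ℝ) →ₗ[ℝ] H) (JS : (Fin NS → ℝ) →ₗ[ℝ] H)
    (G : Matrix (Fin N) (Fin N) ℝ)
    (hG : ∀ k l, G k l = ⟪R (Pi.single k 1), R (Pi.single l 1)⟫)
    (Gh : Matrix (Fin Nh) (Fin Nh) ℝ)
    (hGh : ∀ k l, Gh k l = ⟪Jh (Pi.single k 1), Jh (Pi.single l 1)⟫)
    (MD : Matrix (Fin ND) (Fin ND) ℝ)
    (hMD : ∀ k l, MD k l = ⟪JD (Pi.single k 1), JD (Pi.single l 1)⟫)
    (MS : Matrix (Fin NS) (Fin NS) ℝ)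
    (hMS : ∀ k l, MS k l = ⟪JS (Pi.single k 1), JS (Pi.single l 1)⟫)
    (D : Matrix (Fin N) (Fin ND) ℝ)
    (hD : ∀ k l, D k l = ⟪R (Pi.single k 1), JD (Pi.single l 1)⟫)
    (Sh : Matrix (Fin Nh) (Fin NS) ℝ)
    (hSh : ∀ k l, Sh k l = ⟪Jh (Pi.single k 1), JS (Pi.single l 1)⟫)
    (hne : ∀ (PD : Fin ND → ℝ) (PS : Fin NS → ℝ), (PD, PS) ≠ 0 →
      R (A⁻¹.mulVec (Sb.mulVec PS)) ≠ JD PD ∨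
        Jh (Ah⁻¹.mulVec (Db.mulVec PD)) ≠ JS PS) :
    (Matrix.fromBlocks (gMat G Gh MD MS D Sh) (constraintMat A Ah Sb Db)ᵀ
        (constraintMat A Ah Sb Db) 0).det ≠ 0 ∧
    ∀ b : ((Fin N ⊕ Fin Nh) ⊕ (Fin ND ⊕ Fin NS)) ⊕ (Fin N ⊕ Fin Nh) → ℝ,
      ∃! z, (Matrix.fromBlocks (gMat G Gh MD MS D Sh) (constraintMat A Ah Sb Db)ᵀ
        (constraintMat A Ah Sb Db) 0).mulVec z = b :=
  kkt_block_matrix_nonsingular_general N Nh ND NS A hA Ah hAh Sb Db H R Jh JD JS G hG Gh hGh MD hMD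
    MS hMS D hD Sh hSh hne
end

section
/- The reduced matrix ℳ is symmetric and positive semidefinite. If moreover for every nonzero pair (Ψ_D, Ψ_Σ) ∈ ℝ^{N_D} × ℝ^{N_Σ} one has R A^{-1} S^β Ψ_Σ ≠ J_D Ψ_D or Ĵ Â^{-1} D̂^β Ψ_D ≠ J_Σ Ψ_Σ (in H), then ℳ is positive definite. -/
open Matrix
open scoped RealInnerProductSpace

/-! The quadratic form of `ℳ` at `(Ψ_D, Ψ_Σ)` is
`‖R A⁻¹ Sᵝ Ψ_Σ - J_D Ψ_D‖² + ‖Ĵ Â⁻¹ D̂ᵝ Ψ_D - J_Σ Ψ_Σ‖²`: expanding the two squares produces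
exactly the Gram matrices `G, Ĝ, M^D, M^Σ, D, Ŝ` sandwiched between the blocks of `ℳ`.
Polarized, `ℳ` represents the sum of the inner products of these two residuals, hence is symmetric
and positive semidefinite, and definite when the residuals never vanish together at a nonzero
point. -/

/-- The reduced matrix `ℳ` on `ℝ^{N_D} × ℝ^{N_Σ}`. -/
noncomputable def redMat {N Nh ND NS : ℕ}
    (A : Matrix (Fin N) (Fin N) ℝ) (Ah : Matrix (Fin Nh) (Fin Nh) ℝ)
    (Sb : Matrix (Fin N) (Fin NS) ℝ) (Db : Matrix (Fin Nh) (Fin ND) ℝ)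
    (G : Matrix (Fin N) (Fin N) ℝ) (Gh : Matrix (Fin Nh) (Fin Nh) ℝ)
    (MD : Matrix (Fin ND) (Fin ND) ℝ) (MS : Matrix (Fin NS) (Fin NS) ℝ)
    (D : Matrix (Fin N) (Fin ND) ℝ) (Sh : Matrix (Fin Nh) (Fin NS) ℝ) :
    Matrix (Fin ND ⊕ Fin NS) (Fin ND ⊕ Fin NS) ℝ :=
  Matrix.fromBlocks
    (Dbᵀ * (Ah⁻¹)ᵀ * Gh * Ah⁻¹ * Db + MD)
    (-(Dᵀ * A⁻¹ * Sb) - Dbᵀ * (Ah⁻¹)ᵀ * Sh)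
    (-(Sbᵀ * (A⁻¹)ᵀ * D) - Shᵀ * Ah⁻¹ * Db)
    (Sbᵀ * (A⁻¹)ᵀ * G * A⁻¹ * Sb + MS)

namespace Matrix

theorem dotProduct_transpose_mulVec' {m n α : Type*} [Fintype m] [Fintype n] [CommSemiring α]
    (A : Matrix m n α) (x : n → α) (y : m → α) : x ⬝ᵥ Aᵀ *ᵥ y = (A *ᵥ x) ⬝ᵥ y := by
  rw [dotProduct_mulVec, vecMul_transpose]

variable {ι κ : Type*} [Fintype ι] [Fintype κ] [DecidableEq ι] [DecidableEq κ]
  {H : Type*} [NormedAddCommGroup H] [InnerProductSpace ℝ H]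

theorem dotProduct_mulVec_eq_inner {M : Matrix ι κ ℝ} {T : (ι → ℝ) →ₗ[ℝ] H}
    {S : (κ → ℝ) →ₗ[ℝ] H} (hM : ∀ k l, M k l = ⟪T (Pi.single k 1), S (Pi.single l 1)⟫)
    (x : ι → ℝ) (y : κ → ℝ) : x ⬝ᵥ M *ᵥ y = ⟪T x, S y⟫ := by
  have hB : M = LinearMap.toMatrix₂' ℝ ((innerₗ H).compl₁₂ T S) := by
    ext k l; simp [hM]
  rw [← toLinearMap₂'_apply', hB, toLinearMap₂'_toMatrix']
  rfl

theorem mulVec_dotProduct_eq_inner {M : Matrix ι κ ℝ} {T : (ι → ℝ) →ₗ[ℝ] H}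
    {S : (κ → ℝ) →ₗ[ℝ] H} (hM : ∀ k l, M k l = ⟪T (Pi.single k 1), S (Pi.single l 1)⟫)
    (x : ι → ℝ) (y : κ → ℝ) : (M *ᵥ y) ⬝ᵥ x = ⟪T x, S y⟫ := by
  rw [dotProduct_comm, dotProduct_mulVec_eq_inner hM]

variable {M : Matrix ι ι ℝ} {f g : (ι → ℝ) → H}

theorem isSymm_of_dotProduct_mulVec_eq_inner_add_inner
    (hM : ∀ x y, x ⬝ᵥ M *ᵥ y = ⟪f x, f y⟫ + ⟪g x, g y⟫) : M.IsSymm :=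
  IsSymm.ext fun i j => by
    have hij := hM (Pi.single i 1) (Pi.single j 1)
    have hji := hM (Pi.single j 1) (Pi.single i 1)
    simp only [mulVec_single_one, single_one_dotProduct, col_apply] at hij hji
    rw [hij, hji, real_inner_comm (f _), real_inner_comm (g _)]

theorem posSemidef_of_dotProduct_mulVec_eq_inner_add_inner
    (hM : ∀ x y, x ⬝ᵥ M *ᵥ y = ⟪f x, f y⟫ + ⟪g x, g y⟫) : M.PosSemidef := by
  refine posSemidef_iff_dotProduct_mulVec.mpr
    ⟨isHermitian_iff_isSymm.mpr (isSymm_of_dotProduct_mulVec_eq_inner_add_inner hM), fun x => ?_⟩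
  rw [star_trivial, hM]
  exact add_nonneg real_inner_self_nonneg real_inner_self_nonneg

theorem posDef_of_dotProduct_mulVec_eq_inner_add_inner
    (hM : ∀ x y, x ⬝ᵥ M *ᵥ y = ⟪f x, f y⟫ + ⟪g x, g y⟫)
    (hfg : ∀ x ≠ 0, f x ≠ 0 ∨ g x ≠ 0) : M.PosDef := by
  refine posDef_iff_dotProduct_mulVec.mpr
    ⟨isHermitian_iff_isSymm.mpr (isSymm_of_dotProduct_mulVec_eq_inner_add_inner hM), fun x hx => ?_⟩
  rw [star_trivial, hM]
  rcases hfg x hx with hf | hg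
  · exact add_pos_of_pos_of_nonneg (real_inner_self_pos.mpr hf) real_inner_self_nonneg
  · exact add_pos_of_nonneg_of_pos real_inner_self_nonneg (real_inner_self_pos.mpr hg)

end Matrix

section ReducedMatrix

variable {N Nh ND NS : ℕ} (A : Matrix (Fin N) (Fin N) ℝ) (Ah : Matrix (Fin Nh) (Fin Nh) ℝ)
  (Sb : Matrix (Fin N) (Fin NS) ℝ) (Db : Matrix (Fin Nh) (Fin ND) ℝ)
  {H : Type*} [NormedAddCommGroup H] [InnerProductSpace ℝ H]
  (R : (Fin N → ℝ) →ₗ[ℝ] H) (Jh : (Fin Nh → ℝ) →ₗ[ℝ] H)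
  (JD : (Fin ND → ℝ) →ₗ[ℝ] H) (JS : (Fin NS → ℝ) →ₗ[ℝ] H)

noncomputable def redResidualD (x : Fin ND ⊕ Fin NS → ℝ) : H :=
  R (A⁻¹ *ᵥ Sb *ᵥ (x ∘ Sum.inr)) - JD (x ∘ Sum.inl)

noncomputable def redResidualS (x : Fin ND ⊕ Fin NS → ℝ) : H :=
  Jh (Ah⁻¹ *ᵥ Db *ᵥ (x ∘ Sum.inl)) - JS (x ∘ Sum.inr)

theorem dotProduct_redMat_mulVec {G : Matrix (Fin N) (Fin N) ℝ}
    {Gh : Matrix (Fin Nh) (Fin Nh) ℝ} {MD : Matrix (Fin ND) (Fin ND) ℝ}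
    {MS : Matrix (Fin NS) (Fin NS) ℝ} {D : Matrix (Fin N) (Fin ND) ℝ}
    {Sh : Matrix (Fin Nh) (Fin NS) ℝ}
    (hG : ∀ k l, G k l = ⟪R (Pi.single k 1), R (Pi.single l 1)⟫)
    (hGh : ∀ k l, Gh k l = ⟪Jh (Pi.single k 1), Jh (Pi.single l 1)⟫)
    (hMD : ∀ k l, MD k l = ⟪JD (Pi.single k 1), JD (Pi.single l 1)⟫)
    (hMS : ∀ k l, MS k l = ⟪JS (Pi.single k 1), JS (Pi.single l 1)⟫)
    (hD : ∀ k l, D k l = ⟪R (Pi.single k 1), JD (Pi.single l 1)⟫)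
    (hSh : ∀ k l, Sh k l = ⟪Jh (Pi.single k 1), JS (Pi.single l 1)⟫)
    (x y : Fin ND ⊕ Fin NS → ℝ) :
    x ⬝ᵥ redMat A Ah Sb Db G Gh MD MS D Sh *ᵥ y =
      ⟪redResidualD A Sb R JD x, redResidualD A Sb R JD y⟫ +
        ⟪redResidualS Ah Db Jh JS x, redResidualS Ah Db Jh JS y⟫ := by
  rw [← Sum.elim_comp_inl_inr x, ← Sum.elim_comp_inl_inr y]
  simp only [redMat, redResidualD, redResidualS, fromBlocks_mulVec, sumElim_dotProduct_sumElim,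
    Sum.elim_comp_inl, Sum.elim_comp_inr, add_mulVec, sub_mulVec, neg_mulVec, dotProduct_add,
    dotProduct_sub, dotProduct_neg, ← mulVec_mulVec, dotProduct_transpose_mulVec']
  rw [dotProduct_mulVec_eq_inner hG, dotProduct_mulVec_eq_inner hGh, dotProduct_mulVec_eq_inner hMD,
    dotProduct_mulVec_eq_inner hMS, dotProduct_mulVec_eq_inner hD, dotProduct_mulVec_eq_inner hSh,
    mulVec_dotProduct_eq_inner hD, mulVec_dotProduct_eq_inner hSh]
  simp only [inner_sub_left, inner_sub_right, real_inner_comm]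
  ring

end ReducedMatrix

theorem redMat_symm_posSemidef_posDef_general
    (N Nh ND NS : ℕ)
    (A : Matrix (Fin N) (Fin N) ℝ)
    (Ah : Matrix (Fin Nh) (Fin Nh) ℝ)
    (Sb : Matrix (Fin N) (Fin NS) ℝ) (Db : Matrix (Fin Nh) (Fin ND) ℝ)
    (H : Type*) [NormedAddCommGroup H] [InnerProductSpace ℝ H]
    (R : (Fin N → ℝ) →ₗ[ℝ] H) (Jh : (Fin Nh → ℝ) →ₗ[ℝ] H)
    (JD : (Fin ND → ℝ) →ₗ[ℝ] H) (JS : (Fin NS → ℝ) →ₗ[ℝ] H)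
    (G : Matrix (Fin N) (Fin N) ℝ)
    (hG : ∀ k l, G k l = ⟪R (Pi.single k 1), R (Pi.single l 1)⟫)
    (Gh : Matrix (Fin Nh) (Fin Nh) ℝ)
    (hGh : ∀ k l, Gh k l = ⟪Jh (Pi.single k 1), Jh (Pi.single l 1)⟫)
    (MD : Matrix (Fin ND) (Fin ND) ℝ)
    (hMD : ∀ k l, MD k l = ⟪JD (Pi.single k 1), JD (Pi.single l 1)⟫)
    (MS : Matrix (Fin NS) (Fin NS) ℝ)
    (hMS : ∀ k l, MS k l = ⟪JS (Pi.single k 1), JS (Pi.single l 1)⟫)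
    (D : Matrix (Fin N) (Fin ND) ℝ)
    (hD : ∀ k l, D k l = ⟪R (Pi.single k 1), JD (Pi.single l 1)⟫)
    (Sh : Matrix (Fin Nh) (Fin NS) ℝ)
    (hSh : ∀ k l, Sh k l = ⟪Jh (Pi.single k 1), JS (Pi.single l 1)⟫)
    :
    (redMat A Ah Sb Db G Gh MD MS D Sh).IsSymm ∧
    (redMat A Ah Sb Db G Gh MD MS D Sh).PosSemidef ∧
    ((∀ (PD : Fin ND → ℝ) (PS : Fin NS → ℝ), (PD, PS) ≠ 0 →
        R (A⁻¹.mulVec (Sb.mulVec PS)) ≠ JD PD ∨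
          Jh (Ah⁻¹.mulVec (Db.mulVec PD)) ≠ JS PS) →
      (redMat A Ah Sb Db G Gh MD MS D Sh).PosDef) := by
  have hM := dotProduct_redMat_mulVec A Ah Sb Db R Jh JD JS hG hGh hMD hMS hD hSh
  refine ⟨isSymm_of_dotProduct_mulVec_eq_inner_add_inner hM,
    posSemidef_of_dotProduct_mulVec_eq_inner_add_inner hM,
    fun hnondeg => posDef_of_dotProduct_mulVec_eq_inner_add_inner hM fun x hx => ?_⟩
  have hsplit : (x ∘ Sum.inl, x ∘ Sum.inr) ≠ 0 := by
    simpa [Prod.ext_iff, funext_iff, Sum.forall] using hx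
  simpa [redResidualD, redResidualS, sub_ne_zero] using hnondeg _ _ hsplit

/-- The reduced matrix `ℳ` is symmetric positive semidefinite, and it is
positive definite under the non-degeneracy assumption. -/
theorem redMat_symm_posSemidef_posDef
    (N Nh ND NS : ℕ) (hN : 0 < N) (hNh : 0 < Nh) (hND : 0 < ND) (hNS : 0 < NS)
    (A : Matrix (Fin N) (Fin N) ℝ) (hA : IsUnit A.det)
    (Ah : Matrix (Fin Nh) (Fin Nh) ℝ) (hAh : IsUnit Ah.det)
    (Sb : Matrix (Fin N) (Fin NS) ℝ) (Db : Matrix (Fin Nh) (Fin ND) ℝ)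
    (H : Type*) [NormedAddCommGroup H] [InnerProductSpace ℝ H]
    (R : (Fin N → ℝ) →ₗ[ℝ] H) (Jh : (Fin Nh → ℝ) →ₗ[ℝ] H)
    (JD : (Fin ND → ℝ) →ₗ[ℝ] H) (JS : (Fin NS → ℝ) →ₗ[ℝ] H)
    (G : Matrix (Fin N) (Fin N) ℝ)
    (hG : ∀ k l, G k l = ⟪R (Pi.single k 1), R (Pi.single l 1)⟫)
    (Gh : Matrix (Fin Nh) (Fin Nh) ℝ)
    (hGh : ∀ k l, Gh k l = ⟪Jh (Pi.single k 1), Jh (Pi.single l 1)⟫)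
    (MD : Matrix (Fin ND) (Fin ND) ℝ)
    (hMD : ∀ k l, MD k l = ⟪JD (Pi.single k 1), JD (Pi.single l 1)⟫)
    (MS : Matrix (Fin NS) (Fin NS) ℝ)
    (hMS : ∀ k l, MS k l = ⟪JS (Pi.single k 1), JS (Pi.single l 1)⟫)
    (D : Matrix (Fin N) (Fin ND) ℝ)
    (hD : ∀ k l, D k l = ⟪R (Pi.single k 1), JD (Pi.single l 1)⟫)
    (Sh : Matrix (Fin Nh) (Fin NS) ℝ)
    (hSh : ∀ k l, Sh k l = ⟪Jh (Pi.single k 1), JS (Pi.single l 1)⟫)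
    :
    (redMat A Ah Sb Db G Gh MD MS D Sh).IsSymm ∧
    (redMat A Ah Sb Db G Gh MD MS D Sh).PosSemidef ∧
    ((∀ (PD : Fin ND → ℝ) (PS : Fin NS → ℝ), (PD, PS) ≠ 0 →
        R (A⁻¹.mulVec (Sb.mulVec PS)) ≠ JD PD ∨
          Jh (Ah⁻¹.mulVec (Db.mulVec PD)) ≠ JS PS) →
      (redMat A Ah Sb Db G Gh MD MS D Sh).PosDef) :=
  redMat_symm_posSemidef_posDef_general N Nh ND NS A Ah Sb Db H R Jh JD JS G hG Gh hGh MD hMD MS hMS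
    D hD Sh hSh
end

section
/- For every (ψ_D, ψ_Σ) ∈ V̂ × V̂, the map ψ ↦ J(ψ, ψ_Σ) is Fréchet differentiable at ψ_D, and its derivative in any direction δ ∈ V̂ equals ⟨ E*(E ψ_D − γ u(ψ_Σ)) + D̂* p̂ , δ ⟩_{V̂}, where the adjoint state p̂ ∈ V̂ is the solution of Â* p̂ = E*(E û(ψ_D) − E ψ_Σ). -/
/-! Both terms of `J(·, ψ_Σ)` are halves of squared norms of affine maps `f`, and the derivative
of `½‖f‖²` at `ψ_D` is `⟨f'* f ψ_D, ·⟩`. For the second term `f' = E Â⁻¹ D̂`, so the gradient is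
`D̂* (Â⁻¹)* E* r` with `r = E û(ψ_D) − E ψ_Σ`; since `(Â⁻¹)* = (Â*)⁻¹`, the factor `(Â⁻¹)* E* r`
is exactly the adjoint state `p̂`. -/

open scoped RealInnerProductSpace

variable {V Vh H : Type*}
  [NormedAddCommGroup V] [InnerProductSpace ℝ V] [CompleteSpace V]
  [NormedAddCommGroup Vh] [InnerProductSpace ℝ Vh] [CompleteSpace Vh]
  [NormedAddCommGroup H] [InnerProductSpace ℝ H] [CompleteSpace H]

/-- The state `u(ψ_Σ) = A⁻¹(S ψ_Σ + F)`. -/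
noncomputable def stateU (A : V ≃L[ℝ] V) (S : Vh →L[ℝ] V) (F : V) (ψS : Vh) : V :=
  A.symm (S ψS + F)

/-- The state `û(ψ_D) = Â⁻¹(D̂ ψ_D + G)`. -/
noncomputable def stateUh (Ah : Vh ≃L[ℝ] Vh) (Dh : Vh →L[ℝ] Vh) (G : Vh) (ψD : Vh) : Vh :=
  Ah.symm (Dh ψD + G)

/-- The cost functional `J(ψ_D, ψ_Σ) = ½‖γ u(ψ_Σ) − E ψ_D‖² + ½‖E û(ψ_D) − E ψ_Σ‖²`. -/
noncomputable def costJ (γ : V →L[ℝ] H) (E : Vh →L[ℝ] H)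
    (A : V ≃L[ℝ] V) (Ah : Vh ≃L[ℝ] Vh) (S : Vh →L[ℝ] V) (Dh : Vh →L[ℝ] Vh)
    (F : V) (G : Vh) (ψD ψS : Vh) : ℝ :=
  (1 / 2) * ‖γ (stateU A S F ψS) - E ψD‖ ^ 2
    + (1 / 2) * ‖E (stateUh Ah Dh G ψD) - E ψS‖ ^ 2

section

variable {E F : Type*} [NormedAddCommGroup E] [InnerProductSpace ℝ E] [CompleteSpace E]
  [NormedAddCommGroup F] [InnerProductSpace ℝ F] [CompleteSpace F]

theorem HasFDerivAt.half_norm_sq {f : E → F} {f' : E →L[ℝ] F} {x : E}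
    (hf : HasFDerivAt f f' x) :
    HasFDerivAt (fun y => (1 / 2 : ℝ) * ‖f y‖ ^ 2)
      (innerSL ℝ (ContinuousLinearMap.adjoint f' (f x))) x := by
  refine (hf.norm_sq.const_mul (1 / 2 : ℝ)).congr_fderiv ?_
  rw [ContinuousLinearMap.innerSL_apply_comp]
  module

end

section

variable {𝕜 E F : Type*} [RCLike 𝕜]
  [NormedAddCommGroup E] [InnerProductSpace 𝕜 E] [CompleteSpace E]
  [NormedAddCommGroup F] [InnerProductSpace 𝕜 F] [CompleteSpace F]

theorem ContinuousLinearEquiv.adjoint_symm_adjoint_apply (e : E ≃L[𝕜] F) (p : F) :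
    ContinuousLinearMap.adjoint (e.symm : F →L[𝕜] E)
      (ContinuousLinearMap.adjoint (e : E →L[𝕜] F) p) = p := by
  rw [← ContinuousLinearMap.comp_apply, ← ContinuousLinearMap.adjoint_comp,
    ContinuousLinearEquiv.coe_comp_coe_symm, ContinuousLinearMap.adjoint_id,
    ContinuousLinearMap.id_apply]

end

/-- The map `ψ ↦ J(ψ, ψ_Σ)` is Fréchet differentiable at `ψ_D`, with
derivative `δ ↦ ⟨E*(E ψ_D − γ u(ψ_Σ)) + D̂* p̂, δ⟩`, where `Â* p̂ = E*(E û(ψ_D) − E ψ_Σ)`. -/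
theorem costJ_hasFDerivAt_psiD (γ : V →L[ℝ] H) (E : Vh →L[ℝ] H)
    (A : V ≃L[ℝ] V) (Ah : Vh ≃L[ℝ] Vh) (S : Vh →L[ℝ] V) (Dh : Vh →L[ℝ] Vh)
    (F : V) (G : Vh) (ψD ψS : Vh) (ph : Vh)
    (hph : ContinuousLinearMap.adjoint (Ah : Vh →L[ℝ] Vh) ph
        = ContinuousLinearMap.adjoint E (E (stateUh Ah Dh G ψD) - E ψS)) :
    HasFDerivAt (fun ψ => costJ γ E A Ah S Dh F G ψ ψS)
      (innerSL ℝ (ContinuousLinearMap.adjoint E (E ψD - γ (stateU A S F ψS))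
        + ContinuousLinearMap.adjoint Dh ph)) ψD := by
  have hmisfit : HasFDerivAt (fun ψ => γ (stateU A S F ψS) - E ψ) (-E) ψD :=
    ((hasFDerivAt_const _ ψD).sub E.hasFDerivAt).congr_fderiv (zero_sub _)
  have hobserved : HasFDerivAt (fun ψ => E (stateUh Ah Dh G ψ) - E ψS)
      (E ∘L (Ah.symm : Vh →L[ℝ] Vh) ∘L Dh) ψD :=
    (E.hasFDerivAt.comp ψD ((Ah.symm : Vh →L[ℝ] Vh).hasFDerivAt.comp ψD
      (Dh.hasFDerivAt.add_const G))).sub_const _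
  have hmisfit_grad : ContinuousLinearMap.adjoint (-E) (γ (stateU A S F ψS) - E ψD)
      = ContinuousLinearMap.adjoint E (E ψD - γ (stateU A S F ψS)) := by
    rw [map_neg, neg_apply, ← map_neg, neg_sub]
  have hobserved_grad : ContinuousLinearMap.adjoint (E ∘L (Ah.symm : Vh →L[ℝ] Vh) ∘L Dh)
      (E (stateUh Ah Dh G ψD) - E ψS) = ContinuousLinearMap.adjoint Dh ph := by
    simp only [ContinuousLinearMap.adjoint_comp, ContinuousLinearMap.comp_apply, ← hph,
      ContinuousLinearEquiv.adjoint_symm_adjoint_apply]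
  have hJ := hmisfit.half_norm_sq.add hobserved.half_norm_sq
  rw [hmisfit_grad, hobserved_grad, ← map_add] at hJ
  exact hJ
end

section
/- Fix (ψ_D, ψ_Σ) ∈ V̂ × V̂ and let p ∈ V, p̂ ∈ V̂ be the adjoint states solving A* p = γ*(γ u(ψ_Σ) − E ψ_D) and Â* p̂ = E*(E û(ψ_D) − E ψ_Σ). Take the gradient directions δψ_D = E*(E ψ_D − γ u(ψ_Σ)) + D̂* p̂ and δψ_Σ = E*(E ψ_Σ − E û(ψ_D)) + S* p, and set δu = A^{-1} S δψ_Σ, δû = Â^{-1} D̂ δψ_D. Then the first-order coefficient of J along this direction satisfies ⟨γ u(ψ_Σ) − E ψ_D, γ δu − E δψ_D⟩_H + ⟨E û(ψ_D) − E ψ_Σ, E δû − E δψ_Σ⟩_H = ‖δψ_D‖²_{V̂} + ‖δψ_Σ‖²_{V̂}. -/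
open scoped RealInnerProductSpace

variable {V Vh H : Type*}
  [NormedAddCommGroup V] [InnerProductSpace ℝ V] [CompleteSpace V]
  [NormedAddCommGroup Vh] [InnerProductSpace ℝ Vh] [CompleteSpace Vh]
  [NormedAddCommGroup H] [InnerProductSpace ℝ H] [CompleteSpace H]

/-! The adjoint equation `A* p = γ* r` for the residual `r = γ u(ψ_Σ) − E ψ_D` turns
`⟪r, γ A⁻¹ w⟫` into `⟪p, w⟫`, and likewise for `p̂`. Hence the first-order coefficient equals
`⟪S* p − E* s, δψ_Σ⟫ + ⟪D̂* p̂ − E* r, δψ_D⟫` with `s = E û(ψ_D) − E ψ_Σ`, and the left factors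
are exactly the gradient directions `δψ_Σ` and `δψ_D`. -/

section AdjointState

variable {W X Y Z : Type*}
  [NormedAddCommGroup W] [InnerProductSpace ℝ W] [CompleteSpace W]
  [NormedAddCommGroup X] [InnerProductSpace ℝ X] [CompleteSpace X]
  [NormedAddCommGroup Y] [InnerProductSpace ℝ Y] [CompleteSpace Y]
  [NormedAddCommGroup Z] [InnerProductSpace ℝ Z] [CompleteSpace Z]

open ContinuousLinearMap

theorem inner_apply_symm_eq_inner_of_adjoint_eq (T : W →L[ℝ] Y) (B : W ≃L[ℝ] W) {r : Y} {p : W}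
    (hp : adjoint (B : W →L[ℝ] W) p = adjoint T r) (w : W) :
    ⟪r, T (B.symm w)⟫ = ⟪p, w⟫ :=
  calc ⟪r, T (B.symm w)⟫ = ⟪adjoint T r, B.symm w⟫ := (adjoint_inner_left T _ r).symm
    _ = ⟪p, B (B.symm w)⟫ := by rw [← hp, adjoint_inner_left]; rfl
    _ = ⟪p, w⟫ := by rw [B.apply_symm_apply]

theorem inner_residual_eq_of_adjoint_eq (T : W →L[ℝ] Y) (B : W ≃L[ℝ] W) (M : X →L[ℝ] W)
    (E : Z →L[ℝ] Y) {r : Y} {p : W} (hp : adjoint (B : W →L[ℝ] W) p = adjoint T r)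
    (x : X) (z : Z) :
    ⟪r, T (B.symm (M x)) - E z⟫ = ⟪adjoint M p, x⟫ - ⟪adjoint E r, z⟫ := by
  rw [inner_sub_right, inner_apply_symm_eq_inner_of_adjoint_eq T B hp, adjoint_inner_left,
    adjoint_inner_left]

end AdjointState

/-- For the gradient directions
`δψ_D = E*(E ψ_D − γ u(ψ_Σ)) + D̂* p̂` and `δψ_Σ = E*(E ψ_Σ − E û(ψ_D)) + S* p`, with
`δu = A⁻¹ S δψ_Σ`, `δû = Â⁻¹ D̂ δψ_D`, the first-order coefficient of `J` along this
direction equals `‖δψ_D‖² + ‖δψ_Σ‖²`. -/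
theorem costJ_gradient_direction_identity (γ : V →L[ℝ] H) (E : Vh →L[ℝ] H)
    (A : V ≃L[ℝ] V) (Ah : Vh ≃L[ℝ] Vh) (S : Vh →L[ℝ] V) (Dh : Vh →L[ℝ] Vh)
    (F : V) (G : Vh) (ψD ψS : Vh) (p : V) (ph : Vh)
    (hp : ContinuousLinearMap.adjoint (A : V →L[ℝ] V) p
        = ContinuousLinearMap.adjoint γ (γ (stateU A S F ψS) - E ψD))
    (hph : ContinuousLinearMap.adjoint (Ah : Vh →L[ℝ] Vh) ph
        = ContinuousLinearMap.adjoint E (E (stateUh Ah Dh G ψD) - E ψS))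
    (δψD δψS : Vh)
    (hδψD : δψD = ContinuousLinearMap.adjoint E (E ψD - γ (stateU A S F ψS))
        + ContinuousLinearMap.adjoint Dh ph)
    (hδψS : δψS = ContinuousLinearMap.adjoint E (E ψS - E (stateUh Ah Dh G ψD))
        + ContinuousLinearMap.adjoint S p) :
    ⟪γ (stateU A S F ψS) - E ψD, γ (A.symm (S δψS)) - E δψD⟫
      + ⟪E (stateUh Ah Dh G ψD) - E ψS, E (Ah.symm (Dh δψD)) - E δψS⟫
      = ‖δψD‖ ^ 2 + ‖δψS‖ ^ 2 := by
  open ContinuousLinearMap in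
  set r := γ (stateU A S F ψS) - E ψD
  set s := E (stateUh Ah Dh G ψD) - E ψS
  have hD : δψD = adjoint Dh ph - adjoint E r := by
    rw [hδψD, ← neg_sub, map_neg, neg_add_eq_sub]
  have hS : δψS = adjoint S p - adjoint E s := by
    rw [hδψS, ← neg_sub, map_neg, neg_add_eq_sub]
  calc ⟪r, γ (A.symm (S δψS)) - E δψD⟫ + ⟪s, E (Ah.symm (Dh δψD)) - E δψS⟫
      = ⟪adjoint S p - adjoint E s, δψS⟫ + ⟪adjoint Dh ph - adjoint E r, δψD⟫ := by
        rw [inner_residual_eq_of_adjoint_eq γ A S E hp,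
          inner_residual_eq_of_adjoint_eq E Ah Dh E hph, inner_sub_left, inner_sub_left]
        ring
    _ = ‖δψD‖ ^ 2 + ‖δψS‖ ^ 2 := by
        rw [← hD, ← hS, real_inner_self_eq_norm_sq, real_inner_self_eq_norm_sq, add_comm]
end
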